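/- arXiv:2004.04068 — 2 statements merged into one kernel-verified Lean document; each statement's English description precedes it below -/
import Mathlib

section
/- Let L be a Leibniz algebra over a field F with a subalgebra H of codimension one in L (dim(L/H) = 1) whose core H_L is zero. Then either L is a Lie algebra ([x,x] = 0 for all x ∈ L), or L is two-dimensional with basis x, h, H = Fh, and [x,h] = x, [h,x] = [x,x] = [h,h] = 0. -/
/-! Basic definitions for (right) Leibniz algebras given by a bilinear bracket
on a vector space, following Towers, "Quasi-ideals of Leibniz algebras". -/

section LeibnizDefs

variable {F L : Type*} [Field F] [AddCommGroup L] [Module F L]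

/-- The (right) Leibniz identity for a bilinear bracket `b`:
`[x,[y,z]] = [[x,y],z] - [[x,z],y]`. -/
def IsLeibniz (b : L →ₗ[F] L →ₗ[F] L) : Prop :=
  ∀ x y z : L, b x (b y z) = b (b x y) z - b (b x z) y

/-- `[A,C]`: the span of all brackets `[a,c]` with `a ∈ A`, `c ∈ C`. -/
def bspan (b : L →ₗ[F] L →ₗ[F] L) (A C : Submodule F L) : Submodule F L :=
  Submodule.span F {z : L | ∃ a ∈ A, ∃ c ∈ C, z = b a c}

/-- A subalgebra is a subspace `H` with `[H,H] ⊆ H`. -/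
def IsSubalgebra (b : L →ₗ[F] L →ₗ[F] L) (H : Submodule F L) : Prop :=
  bspan b H H ≤ H

/-- An ideal is a subspace `A` with `[A,L] + [L,A] ⊆ A`. -/
def IsIdeal (b : L →ₗ[F] L →ₗ[F] L) (A : Submodule F L) : Prop :=
  bspan b A ⊤ ⊔ bspan b ⊤ A ≤ A

/-- A quasi-ideal of `L` is a subspace `H` with `[H,K] + [K,H] ⊆ H + K`
for every subspace `K` of `L`. -/
def IsQuasiIdeal (b : L →ₗ[F] L →ₗ[F] L) (H : Submodule F L) : Prop :=
  ∀ K : Submodule F L, bspan b H K ⊔ bspan b K H ≤ H ⊔ K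

/-- `H` is a quasi-ideal of the subalgebra `E`: `H ⊆ E` and
`[H,K] + [K,H] ⊆ H + K` for every subspace `K` of `E`. -/
def IsQuasiIdealIn (b : L →ₗ[F] L →ₗ[F] L) (H E : Submodule F L) : Prop :=
  H ≤ E ∧ ∀ K : Submodule F L, K ≤ E → bspan b H K ⊔ bspan b K H ≤ H ⊔ K

/-- `H` is an `m`-step subquasi-ideal of `L`: there is a chain of subalgebras
`H = H_m qu H_{m-1} qu ... qu H_0 = L`, each a quasi-ideal of the next.
(Here `C i` is `H_i`.) -/
def IsSubquasiIdealSteps (b : L →ₗ[F] L →ₗ[F] L) (m : ℕ) (H : Submodule F L) : Prop :=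
  ∃ C : ℕ → Submodule F L, C 0 = ⊤ ∧ C m = H ∧
    (∀ i ≤ m, IsSubalgebra b (C i)) ∧
    ∀ i < m, IsQuasiIdealIn b (C (i + 1)) (C i)

/-- `H` is a subquasi-ideal of `L` if it is an `m`-step subquasi-ideal for some `m`. -/
def IsSubquasiIdeal (b : L →ₗ[F] L →ₗ[F] L) (H : Submodule F L) : Prop :=
  ∃ m : ℕ, IsSubquasiIdealSteps b m H

/-- Lower central series: `lowerCentral b K n` is `K^{n+1}` in the paper's notation,
i.e. `K^1 = K`, `K^{k+1} = [K^k, K]`. -/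
def lowerCentral (b : L →ₗ[F] L →ₗ[F] L) (K : Submodule F L) : ℕ → Submodule F L
  | 0 => K
  | n + 1 => bspan b (lowerCentral b K n) K

/-- Derived series: `derSeries b H n` is `H^{(n+1)}` in the paper's notation,
i.e. `H^{(1)} = H`, `H^{(k+1)} = [H^{(k)}, H^{(k)}]`. -/
def derSeries (b : L →ₗ[F] L →ₗ[F] L) (H : Submodule F L) : ℕ → Submodule F L
  | 0 => H
  | n + 1 => bspan b (derSeries b H n) (derSeries b H n)

/-- The core `H_L` of `H`: the sum of all ideals of `L` contained in `H`. -/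
def coreOf (b : L →ₗ[F] L →ₗ[F] L) (H : Submodule F L) : Submodule F L :=
  sSup {A : Submodule F L | IsIdeal b A ∧ A ≤ H}

/-- A derivation of the bracket `b`. -/
def IsDerivation (b : L →ₗ[F] L →ₗ[F] L) (d : L →ₗ[F] L) : Prop :=
  ∀ x y : L, d (b x y) = b (d x) y + b x (d y)

/-- `I`: the span of all squares `[x,x]`, `x ∈ L`. -/
def sqSpan (b : L →ₗ[F] L →ₗ[F] L) : Submodule F L :=
  Submodule.span F {z : L | ∃ x : L, z = b x x}

/-- The centre `Z(L) = {z | [z,x] = [x,z] = 0 for all x}`. -/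
def lcenter (b : L →ₗ[F] L →ₗ[F] L) : Submodule F L where
  carrier := {z : L | ∀ x : L, b z x = 0 ∧ b x z = 0}
  zero_mem' := by intro x; simp
  add_mem' := by
    intro y z hy hz x
    obtain ⟨h1, h2⟩ := hy x
    obtain ⟨h3, h4⟩ := hz x
    constructor <;> simp [h1, h2, h3, h4]
  smul_mem' := by
    intro c z hz x
    obtain ⟨h1, h2⟩ := hz x
    constructor <;> simp [h1, h2]

/-- The centre of a subalgebra `E`, as a subspace of `L`:
`Z(E) = {z ∈ E | [z,x] = [x,z] = 0 for all x ∈ E}`. -/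
def centerIn (b : L →ₗ[F] L →ₗ[F] L) (E : Submodule F L) : Submodule F L where
  carrier := {z : L | z ∈ E ∧ ∀ x ∈ E, b z x = 0 ∧ b x z = 0}
  zero_mem' := ⟨E.zero_mem, by intro x _; simp⟩
  add_mem' := by
    intro y z hy hz
    refine ⟨E.add_mem hy.1 hz.1, fun x hx => ?_⟩
    obtain ⟨h1, h2⟩ := hy.2 x hx
    obtain ⟨h3, h4⟩ := hz.2 x hx
    constructor <;> simp [h1, h2, h3, h4]
  smul_mem' := by
    intro c z hz
    refine ⟨E.smul_mem c hz.1, fun x hx => ?_⟩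
    obtain ⟨h1, h2⟩ := hz.2 x hx
    constructor <;> simp [h1, h2]

/-- The subalgebra generated by a set `S`. -/
def subalgGen (b : L →ₗ[F] L →ₗ[F] L) (S : Set L) : Submodule F L :=
  sInf {K : Submodule F L | IsSubalgebra b K ∧ S ⊆ K}

/-- `x` is a left Engel element: for each `y` there is `n` with `R_x^n(y) = 0`,
where `R_x(y) = [y,x]`. -/
def IsLeftEngel (b : L →ₗ[F] L →ₗ[F] L) (x : L) : Prop :=
  ∀ y : L, ∃ n : ℕ, ((b.flip x) ^ n) y = 0

end LeibnizDefs

section AuxLemmas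

variable {F L : Type*} [Field F] [AddCommGroup L] [Module F L]

lemma bspan_le_iff {b : L →ₗ[F] L →ₗ[F] L} {A C K : Submodule F L} :
    bspan b A C ≤ K ↔ ∀ a ∈ A, ∀ c ∈ C, b a c ∈ K := by
  rw [bspan, Submodule.span_le]
  constructor
  · intro h a ha c hc; exact h ⟨a, ha, c, hc, rfl⟩
  · rintro h z ⟨a, ha, c, hc, rfl⟩; exact h a ha c hc

lemma mem_bspan {b : L →ₗ[F] L →ₗ[F] L} {A C : Submodule F L} {a c : L}
    (ha : a ∈ A) (hc : c ∈ C) : b a c ∈ bspan b A C :=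
  Submodule.subset_span ⟨a, ha, c, hc, rfl⟩

lemma sq_mem_sqSpan (b : L →ₗ[F] L →ₗ[F] L) (x : L) : b x x ∈ sqSpan b :=
  Submodule.subset_span ⟨x, rfl⟩

lemma left_kills_sq {b : L →ₗ[F] L →ₗ[F] L} (hb : IsLeibniz b) (z y : L) :
    b z (b y y) = 0 := by
  rw [hb z y y, sub_self]

lemma left_kills_sqSpan {b : L →ₗ[F] L →ₗ[F] L} (hb : IsLeibniz b) {w : L}
    (hw : w ∈ sqSpan b) (z : L) : b z w = 0 := by
  have h : sqSpan b ≤ LinearMap.ker (b z) := by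
    rw [sqSpan, Submodule.span_le]
    rintro _ ⟨y, rfl⟩
    exact LinearMap.mem_ker.2 (left_kills_sq hb z y)
  exact LinearMap.mem_ker.1 (h hw)

lemma sum_comm_mem_sqSpan (b : L →ₗ[F] L →ₗ[F] L) (a c : L) :
    b a c + b c a ∈ sqSpan b := by
  have h : b a c + b c a = b (a + c) (a + c) - b a a - b c c := by
    simp only [map_add, LinearMap.add_apply]
    abel
  rw [h]
  exact sub_mem (sub_mem (sq_mem_sqSpan b _) (sq_mem_sqSpan b _)) (sq_mem_sqSpan b _)

lemma sqSpan_bracket_mem {b : L →ₗ[F] L →ₗ[F] L} (hb : IsLeibniz b) {w : L}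
    (hw : w ∈ sqSpan b) (l : L) : b w l ∈ sqSpan b := by
  set K : Submodule F L :=
    { carrier := {w : L | ∀ l : L, b w l ∈ sqSpan b}
      zero_mem' := by intro l; simp only [map_zero, LinearMap.zero_apply]; exact (sqSpan b).zero_mem
      add_mem' := by
        intro y z hy hz l
        have : b (y + z) l = b y l + b z l := by simp [map_add]
        rw [this]; exact (sqSpan b).add_mem (hy l) (hz l)
      smul_mem' := by
        intro c z hz l
        have : b (c • z) l = c • b z l := by simp [map_smul]
        rw [this]; exact (sqSpan b).smul_mem c (hz l) } with hK
  have hle : sqSpan b ≤ K := by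
    rw [sqSpan, Submodule.span_le]
    rintro _ ⟨y, rfl⟩ l
    have h1 := hb y y l
    have h2 : b (b y y) l = b y (b y l) + b (b y l) y := by
      rw [h1]; abel
    rw [h2]
    exact sum_comm_mem_sqSpan b y (b y l)
  exact hle hw l

end AuxLemmas

variable {F L : Type*} [Field F] [AddCommGroup L] [Module F L]

/-- A Leibniz algebra with a core-free subalgebra of codimension one
is a Lie algebra or the two-dimensional non-Lie almost abelian Leibniz algebra. -/
theorem corefree_codim_one_subalgebra (b : L →ₗ[F] L →ₗ[F] L) (hb : IsLeibniz b)
    (H : Submodule F L) (hsub : IsSubalgebra b H)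
    (hcodim : Module.rank F (L ⧸ H) = 1) (hcore : coreOf b H = ⊥) :
    (∀ x : L, b x x = 0) ∨
    (∃ x h : L, LinearIndependent F ![x, h] ∧ Submodule.span F {x, h} = ⊤ ∧
      H = Submodule.span F {h} ∧
      b x h = x ∧ b h x = 0 ∧ b x x = 0 ∧ b h h = 0) := by
  classical
  by_cases hIH : sqSpan b ≤ H
  · -- squares span is an ideal inside H, hence zero: L is Lie
    left
    have hideal : IsIdeal b (sqSpan b) := by
      apply sup_le
      · rw [bspan_le_iff]; intro a ha c _; exact sqSpan_bracket_mem hb ha c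
      · rw [bspan_le_iff]; intro a _ c hc
        rw [left_kills_sqSpan hb hc a]; exact (sqSpan b).zero_mem
    have h1 : sqSpan b ≤ coreOf b H := le_sSup ⟨hideal, hIH⟩
    rw [hcore, le_bot_iff] at h1
    intro x
    have hx := sq_mem_sqSpan b x
    rw [h1, Submodule.mem_bot] at hx
    exact hx
  · obtain ⟨x, hxI, hxH⟩ := SetLike.not_le_iff_exists.1 hIH
    have hxne : x ≠ 0 := fun h0 => hxH (h0 ▸ H.zero_mem)
    -- every element of L decomposes as (element of H) + scalar • x
    have hdec : ∀ l : L, ∃ c : F, l - c • x ∈ H := by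
      obtain ⟨v₀, hv₀⟩ := rank_le_one_iff.1 hcodim.le
      have hx0 : (Submodule.Quotient.mk x : L ⧸ H) ≠ 0 := by
        simp only [ne_eq, Submodule.Quotient.mk_eq_zero]; exact hxH
      obtain ⟨r, hr⟩ := hv₀ (Submodule.Quotient.mk x)
      have hrne : r ≠ 0 := by rintro rfl; rw [zero_smul] at hr; exact hx0 hr.symm
      intro l
      obtain ⟨s, hs⟩ := hv₀ (Submodule.Quotient.mk l)
      refine ⟨s * r⁻¹, ?_⟩
      rw [← Submodule.Quotient.mk_eq_zero (p := H), Submodule.Quotient.mk_sub,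
        Submodule.Quotient.mk_smul, ← hs, ← hr, smul_smul, mul_assoc,
        inv_mul_cancel₀ hrne, mul_one, sub_self]
    -- sqSpan ⊓ H is an ideal contained in H, hence zero
    have hIcapH : sqSpan b ⊓ H = ⊥ := by
      have hid : IsIdeal b (sqSpan b ⊓ H) := by
        apply sup_le
        · rw [bspan_le_iff]; rintro a ⟨haI, haH⟩ c _
          obtain ⟨t, ht⟩ := hdec c
          have hsplit : b a c = b a (c - t • x) := by
            simp [map_sub, map_smul, left_kills_sqSpan hb hxI a]
          rw [hsplit]
          exact ⟨sqSpan_bracket_mem hb haI _, hsub (mem_bspan haH ht)⟩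
        · rw [bspan_le_iff]; rintro a _ c ⟨hcI, _⟩
          rw [left_kills_sqSpan hb hcI a]; exact Submodule.zero_mem _
      exact le_bot_iff.1 (hcore ▸ le_sSup ⟨hid, inf_le_right⟩)
    -- every element of sqSpan is a multiple of x
    have hImul : ∀ w ∈ sqSpan b, ∃ c : F, w = c • x := by
      intro w hw
      obtain ⟨c, hc⟩ := hdec w
      have h2 : w - c • x ∈ sqSpan b ⊓ H :=
        ⟨sub_mem hw ((sqSpan b).smul_mem c hxI), hc⟩
      rw [hIcapH, Submodule.mem_bot, sub_eq_zero] at h2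
      exact ⟨c, h2⟩
    by_cases hlam : ∀ y ∈ H, b x y = 0
    · -- H is then an ideal, hence zero; L = Fx is abelian
      left
      have hid : IsIdeal b H := by
        apply sup_le <;> rw [bspan_le_iff]
        · intro a ha c _
          obtain ⟨t, ht⟩ := hdec c
          have hsplit : b a c = b a (c - t • x) := by
            simp [map_sub, map_smul, left_kills_sqSpan hb hxI a]
          rw [hsplit]; exact hsub (mem_bspan ha ht)
        · intro a _ c hc
          obtain ⟨t, ht⟩ := hdec a
          have hsplit : b a c = b (a - t • x) c := by
            have ha' : a = (a - t • x) + t • x := (sub_add_cancel a (t • x)).symm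
            conv_lhs => rw [ha']
            simp [map_add, map_smul, hlam c hc]
          rw [hsplit]; exact hsub (mem_bspan ht hc)
      have hH : H = ⊥ := le_bot_iff.1 (hcore ▸ le_sSup ⟨hid, le_refl H⟩)
      intro z
      obtain ⟨t, ht⟩ := hdec z
      rw [hH, Submodule.mem_bot, sub_eq_zero] at ht
      rw [ht]
      simp [map_smul, left_kills_sqSpan hb hxI x]
    · right
      push_neg at hlam
      obtain ⟨h0, hh0, hne0⟩ := hlam
      obtain ⟨c0, hc0⟩ := hImul (b x h0) (sqSpan_bracket_mem hb hxI h0)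
      have hc0ne : c0 ≠ 0 := by rintro rfl; rw [zero_smul] at hc0; exact hne0 hc0
      set h : L := c0⁻¹ • h0 with hhdef
      have hhH : h ∈ H := H.smul_mem _ hh0
      have hxh : b x h = x := by
        rw [hhdef, map_smul, hc0, smul_smul, inv_mul_cancel₀ hc0ne, one_smul]
      -- K = H ⊓ ker (b x) is an ideal in H, hence zero
      have hKbot : H ⊓ LinearMap.ker (b x) = ⊥ := by
        have hid : IsIdeal b (H ⊓ LinearMap.ker (b x)) := by
          apply sup_le <;> rw [bspan_le_iff]
          · rintro a ⟨haH, haK⟩ c _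
            have haK' : b x a = 0 := haK
            obtain ⟨t, ht⟩ := hdec c
            have hsplit : b a c = b a (c - t • x) := by
              simp [map_sub, map_smul, left_kills_sqSpan hb hxI a]
            rw [hsplit]
            refine ⟨hsub (mem_bspan haH ht), LinearMap.mem_ker.2 ?_⟩
            obtain ⟨d, hd⟩ := hImul (b x (c - t • x)) (sqSpan_bracket_mem hb hxI _)
            rw [hb x a (c - t • x), haK', hd]
            simp [map_smul, haK']
          · rintro a _ c ⟨hcH, hcK⟩
            have hcK' : b x c = 0 := hcK
            obtain ⟨t, ht⟩ := hdec a
            have hsplit : b a c = b (a - t • x) c := by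
              have ha' : a = (a - t • x) + t • x := (sub_add_cancel a (t • x)).symm
              conv_lhs => rw [ha']
              simp [map_add, map_smul, hcK']
            rw [hsplit]
            refine ⟨hsub (mem_bspan ht hcH), LinearMap.mem_ker.2 ?_⟩
            obtain ⟨d, hd⟩ := hImul (b x (a - t • x)) (sqSpan_bracket_mem hb hxI _)
            rw [hb x (a - t • x) c, hd, hcK']
            simp [map_smul, hcK']
        exact le_bot_iff.1 (hcore ▸ le_sSup ⟨hid, inf_le_left⟩)
      -- every element of H is a multiple of h
      have hmulH : ∀ h' ∈ H, ∃ e : F, h' = e • h := by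
        intro h' hh'
        obtain ⟨e, he⟩ := hImul (b x h') (sqSpan_bracket_mem hb hxI h')
        have hm : h' - e • h ∈ H ⊓ LinearMap.ker (b x) := by
          refine ⟨sub_mem hh' (H.smul_mem e hhH), LinearMap.mem_ker.2 ?_⟩
          rw [map_sub, map_smul, hxh, he, sub_self]
        rw [hKbot, Submodule.mem_bot, sub_eq_zero] at hm
        exact ⟨e, hm⟩
      have hhne : h ≠ 0 := by
        intro h0
        rw [h0, map_zero] at hxh
        exact hxne hxh.symm
      have hhh : b h h = 0 := by
        have hm : b h h ∈ H ⊓ LinearMap.ker (b x) := by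
          refine ⟨hsub (mem_bspan hhH hhH), LinearMap.mem_ker.2 ?_⟩
          rw [hb x h h, sub_self]
        rw [hKbot, Submodule.mem_bot] at hm
        exact hm
      have hbhx : b h x = 0 := left_kills_sqSpan hb hxI h
      have hbxx : b x x = 0 := left_kills_sqSpan hb hxI x
      refine ⟨x, h, ?_, ?_, ?_, hxh, hbhx, hbxx, hhh⟩
      · rw [LinearIndependent.pair_iff' hxne]
        intro a ha
        rcases eq_or_ne a 0 with rfl | hane
        · rw [zero_smul] at ha; exact hhne ha.symm
        · apply hxH
          have : x = a⁻¹ • h := by rw [← ha, smul_smul, inv_mul_cancel₀ hane, one_smul]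
          rw [this]; exact H.smul_mem _ hhH
      · rw [eq_top_iff]
        intro l _
        obtain ⟨t, ht⟩ := hdec l
        obtain ⟨e, he⟩ := hmulH _ ht
        rw [Submodule.mem_span_pair]
        exact ⟨t, e, by rw [← he]; abel⟩
      · apply le_antisymm
        · intro h' hh'
          obtain ⟨e, he⟩ := hmulH h' hh'
          rw [he]
          exact Submodule.smul_mem _ _ (Submodule.mem_span_singleton_self h)
        · rw [Submodule.span_singleton_le_iff_mem]; exact hhH
end

section
/- Let L be a Leibniz algebra over a field F in which every subalgebra is a quasi-ideal, with I ≠ 0, and suppose L/I is almost abelian: there exist an ideal B of L with I ⊆ B and B ≠ I, [B,B] ⊆ I, and an element h ∈ L \ B with L = B + Fh and [b,h] - b ∈ I for all b ∈ B. Then: (i) I ⊆ Z(L); and (ii) F has characteristic 2 and contains an element that is not a square, Z(L) = Fz is one-dimensional, and L = C ∔ Fz ∔ Fh (vector-space direct sum) where for all c, c' ∈ C: [c,c'] = [c',c] ∈ Fz; [c,c] = λ_c z with λ_c ∈ F not a square in F (for c ≠ 0); [c,h] = [h,c] = c; and [h,h] = z. -/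
/-! Every isotropic vector `e` (`[e,e] = 0`) spans a subalgebra, hence a quasi-ideal, so its
brackets with any `y` stay in `Fe + Fy`. Playing this against the flag `I < B < L` shows that
`[I,B] = 0` and then that every isotropic vector lies in `I`. So `[c,c] ≠ 0` for `c ∈ B \ I`, and
the Leibniz identity for `(c,c,h)` gives `[a,h] = 2a` on `I`; then `[h,h] - 2h` is isotropic,
whence `2 = 0`. In characteristic 2 the vector `c + αh` is isotropic as soon as
`[c,c] = α²[h,h]`, which is why the squares on `C = {c ∈ B | [c,h] = c}` have non-square
coefficients. -/

open Submodule Module.End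

section General

variable {F L : Type*} [Field F] [AddCommGroup L] [Module F L]

theorem Submodule.eq_zero_of_smul_mem_of_notMem {M : Submodule F L} {t : F} {x : L}
    (hx : x ∉ M) (ht : t • x ∈ M) : t = 0 := by
  by_contra ht0
  exact hx ((M.smul_mem_iff ht0).mp ht)

theorem Submodule.mem_of_mem_sup_span_singleton {H M : Submodule F L} {x c : L}
    (hx : x ∈ H ⊔ span F {c}) (hxM : x ∈ M) (hHM : H ≤ M) (hc : c ∉ M) : x ∈ H := by
  obtain ⟨u, hu, v, hv, rfl⟩ := mem_sup.mp hx
  obtain ⟨t, rfl⟩ := mem_span_singleton.mp hv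
  have ht : t = 0 := M.eq_zero_of_smul_mem_of_notMem hc ((M.add_mem_iff_right (hHM hu)).mp hxM)
  simpa [ht] using hu

theorem Submodule.eq_zero_of_mem_span_singleton {M : Submodule F L} {x c : L}
    (hx : x ∈ span F {c}) (hxM : x ∈ M) (hc : c ∉ M) : x = 0 := by
  simpa using mem_of_mem_sup_span_singleton (H := ⊥) (by simpa using hx) hxM bot_le hc

theorem Submodule.eq_zero_of_mem_sup_span_singleton {M N : Submodule F L} (hMN : M ≤ N)
    {x p q : L} (hx : x ∈ span F {p} ⊔ span F {q}) (hxM : x ∈ M) (hp : p ∈ N)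
    (hpM : p ∉ M) (hq : q ∉ N) : x = 0 :=
  eq_zero_of_mem_span_singleton
    (mem_of_mem_sup_span_singleton hx (hMN hxM) ((span_singleton_le_iff_mem p N).mpr hp) hq) hxM hpM

theorem Submodule.le_of_forall_apply_add_smul_mem {M N S : Submodule F L} (hMN : M < N)
    (f : L →ₗ[F] L) (hf : ∀ a ∈ M, f a = 0) {γ : F} (hγ : γ ≠ 0)
    (hS : ∀ c ∈ N, c ∉ M → f c + γ • c ∈ S) : M ≤ S := by
  obtain ⟨c, hcN, hcM⟩ := SetLike.exists_of_lt hMN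
  intro a ha
  have hc := hS c hcN hcM
  have hca := hS (c + a) (add_mem hcN (hMN.le ha)) fun h => hcM (by simpa using sub_mem h ha)
  have : γ • a = (f (c + a) + γ • (c + a)) - (f c + γ • c) := by
    rw [map_add, hf a ha]
    module
  exact (S.smul_mem_iff hγ).mp (this ▸ sub_mem hca hc)

theorem Submodule.exists_forall_apply_eq_smul (M : Submodule F L) (f : L →ₗ[F] L)
    (hf : ∀ v ∈ M, ∃ α : F, f v = α • v) : ∃ α : F, ∀ v ∈ M, f v = α • v := by
  have hmaps : ∀ v ∈ M, f v ∈ M := fun v hv => by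
    obtain ⟨α, hα⟩ := hf v hv
    exact hα ▸ M.smul_mem α hv
  obtain ⟨α, hα⟩ := LinearMap.exists_eq_smul_id_of_forall_notLinearIndependent
    (f := f.restrict hmaps) fun v hind => by
      obtain ⟨β, hβ⟩ := hf v v.2
      have := LinearIndependent.pair_iff.mp hind β (-1) (by ext; simp [hβ])
      exact one_ne_zero (neg_eq_zero.mp this.2)
  exact ⟨α, fun v hv => by
    simpa using congr_arg Subtype.val (LinearMap.congr_fun hα ⟨v, hv⟩)⟩

variable (b : L →ₗ[F] L →ₗ[F] L)

theorem bspan_eq_map₂ (A C : Submodule F L) : bspan b A C = map₂ b A C := by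
  rw [map₂_eq_span_image2, bspan]
  congr 1
  ext z
  simp [Set.mem_image2, eq_comm]

theorem bracket_mem_bspan {A C : Submodule F L} {a c : L} (ha : a ∈ A) (hc : c ∈ C) :
    b a c ∈ bspan b A C :=
  bspan_eq_map₂ b A C ▸ apply_mem_map₂ b ha hc

theorem isSubalgebra_span {s : Set L} (hs : ∀ x ∈ s, ∀ y ∈ s, b x y ∈ span F s) :
    IsSubalgebra b (span F s) := by
  rw [IsSubalgebra, bspan_eq_map₂, map₂_span_span, span_le]
  rintro _ ⟨x, hx, y, hy, rfl⟩
  exact hs x hx y hy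

theorem bracket_self_mem_sqSpan (x : L) : b x x ∈ sqSpan b :=
  subset_span ⟨x, rfl⟩

theorem bracket_add_bracket_swap_mem_sqSpan (x y : L) : b x y + b y x ∈ sqSpan b := by
  have : b x y + b y x = b (x + y) (x + y) - b x x - b y y := by
    simp only [map_add, LinearMap.add_apply]
    abel
  rw [this]
  exact sub_mem (sub_mem (bracket_self_mem_sqSpan b _) (bracket_self_mem_sqSpan b x))
    (bracket_self_mem_sqSpan b y)

variable {b}

theorem IsQuasiIdeal.bracket_mem_sup_span {H : Submodule F L} (hH : IsQuasiIdeal b H)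
    {x : L} (hx : x ∈ H) (y : L) :
    b x y ∈ H ⊔ span F {y} ∧ b y x ∈ H ⊔ span F {y} :=
  ⟨hH _ (mem_sup_left (bracket_mem_bspan b hx (mem_span_singleton_self y))),
    hH _ (mem_sup_right (bracket_mem_bspan b (mem_span_singleton_self y) hx))⟩

theorem isQuasiIdeal_span_singleton
    (hq : ∀ H : Submodule F L, IsSubalgebra b H → IsQuasiIdeal b H)
    {e : L} (he : b e e = 0) : IsQuasiIdeal b (span F {e}) :=
  hq _ (isSubalgebra_span b (by simp [he]))

theorem exists_bracket_eq_smul (hq : ∀ H : Submodule F L, IsSubalgebra b H → IsQuasiIdeal b H)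
    {M : Submodule F L} {a y : L} (ha : b a a = 0) (haM : a ∈ M) (hay : b a y ∈ M)
    (hy : y ∉ M) :
    ∃ α : F, b a y = α • a := by
  have := mem_of_mem_sup_span_singleton
    ((isQuasiIdeal_span_singleton hq ha).bracket_mem_sup_span (mem_span_singleton_self a) y).1 hay
    ((span_singleton_le_iff_mem a M).mpr haM) hy
  obtain ⟨α, hα⟩ := mem_span_singleton.mp this
  exact ⟨α, hα.symm⟩

theorem IsLeibniz.bracket_eq_zero_of_mem_sqSpan (hb : IsLeibniz b) (x : L) {y : L}
    (hy : y ∈ sqSpan b) : b x y = 0 := by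
  have : sqSpan b ≤ LinearMap.ker (b x) :=
    span_le.mpr (by rintro _ ⟨u, rfl⟩; simp [hb x u u])
  exact this hy

theorem mem_inf_eigenspace_flip_one {B : Submodule F L} {h x : L} :
    x ∈ B ⊓ eigenspace (b.flip h) 1 ↔ x ∈ B ∧ b x h = x := by
  simp

end General

section AlmostAbelian

variable {F L : Type*} [Field F] [AddCommGroup L] [Module F L]

/-- `L/I` is almost abelian, witnessed by `B` and `h`: `L/I = B/I ∔ F(h + I)` with `B/I`
abelian and `h` acting on it as the identity. -/
structure IsAlmostAbelianModSq (b : L →ₗ[F] L →ₗ[F] L) (B : Submodule F L) (h : L) :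
    Prop where
  sqSpan_lt : sqSpan b < B
  bspan_le : bspan b B B ≤ sqSpan b
  notMem : h ∉ B
  sup_span_eq_top : B ⊔ span F {h} = ⊤
  bracket_sub_mem : ∀ x ∈ B, b x h - x ∈ sqSpan b

namespace IsAlmostAbelianModSq

variable {b : L →ₗ[F] L →ₗ[F] L} {B : Submodule F L} {h : L}

theorem sqSpan_le (hB : IsAlmostAbelianModSq b B h) : sqSpan b ≤ B :=
  hB.sqSpan_lt.le

theorem bracket_mem_sqSpan (hB : IsAlmostAbelianModSq b B h) {x y : L} (hx : x ∈ B)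
    (hy : y ∈ B) : b x y ∈ sqSpan b :=
  hB.bspan_le (bracket_mem_bspan b hx hy)

theorem eq_zero_of_smul_mem (hB : IsAlmostAbelianModSq b B h) {t : F} (ht : t • h ∈ B) :
    t = 0 :=
  B.eq_zero_of_smul_mem_of_notMem hB.notMem ht

theorem exists_eq_add_smul (hB : IsAlmostAbelianModSq b B h) (x : L) :
    ∃ d ∈ B, ∃ γ : F, d + γ • h = x := by
  have hx : x ∈ B ⊔ span F {h} := hB.sup_span_eq_top ▸ mem_top
  obtain ⟨d, hd, v, hv, rfl⟩ := mem_sup.mp hx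
  obtain ⟨γ, rfl⟩ := mem_span_singleton.mp hv
  exact ⟨d, hd, γ, rfl⟩

theorem bracket_h_add_mem_sqSpan (hB : IsAlmostAbelianModSq b B h) {x : L} (hx : x ∈ B) :
    b h x + x ∈ sqSpan b := by
  have : b h x + x = (b x h + b h x) - (b x h - x) := by abel
  rw [this]
  exact sub_mem (bracket_add_bracket_swap_mem_sqSpan b x h) (hB.bracket_sub_mem x hx)

theorem bracket_h_mem (hB : IsAlmostAbelianModSq b B h) {x : L} (hx : x ∈ B) : b x h ∈ B := by
  simpa using add_mem (hB.sqSpan_le (hB.bracket_sub_mem x hx)) hx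

theorem bracket_bracket_h_right (hb : IsLeibniz b) (hB : IsAlmostAbelianModSq b B h) (x : L)
    {y : L} (hy : y ∈ B) : b x (b y h) = b x y := by
  have := hb.bracket_eq_zero_of_mem_sqSpan x (hB.bracket_sub_mem y hy)
  rwa [map_sub, sub_eq_zero] at this

theorem bracket_eq_zero_of_mem_sqSpan_of_mem (hb : IsLeibniz b)
    (hq : ∀ H : Submodule F L, IsSubalgebra b H → IsQuasiIdeal b H)
    (hB : IsAlmostAbelianModSq b B h) {a c : L} (ha : a ∈ sqSpan b) (hc : c ∈ B) :
    b a c = 0 := by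
  by_cases hcI : c ∈ sqSpan b
  · exact hb.bracket_eq_zero_of_mem_sqSpan a hcI
  obtain ⟨α, hα⟩ : ∃ α : F, ∀ a ∈ sqSpan b, b a c = α • a :=
    (sqSpan b).exists_forall_apply_eq_smul (b.flip c) fun a ha =>
      exists_bracket_eq_smul hq (hb.bracket_eq_zero_of_mem_sqSpan a ha) ha
        (hB.bracket_mem_sqSpan (hB.sqSpan_le ha) hc) hcI
  have hah : b a h ∈ sqSpan b := by
    simpa using add_mem (hB.bracket_sub_mem a (hB.sqSpan_le ha)) ha
  -- right multiplication by `c` is the scalar `α` on `I`, so Leibniz for `(a, c, h)` reads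
  -- `[a,c] = α[a,h] - α[a,h]`
  have key := hb a c h
  rw [hα a ha]
  rwa [hB.bracket_bracket_h_right hb a hc, hα a ha, map_smul, LinearMap.smul_apply, hα _ hah,
    sub_self] at key

theorem bracket_bracket_h_left (hb : IsLeibniz b)
    (hq : ∀ H : Submodule F L, IsSubalgebra b H → IsQuasiIdeal b H)
    (hB : IsAlmostAbelianModSq b B h) {x y : L} (hx : x ∈ B) (hy : y ∈ B) :
    b (b x h) y = b x y := by
  have := hB.bracket_eq_zero_of_mem_sqSpan_of_mem hb hq (hB.bracket_sub_mem x hx) hy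
  rwa [map_sub, LinearMap.sub_apply, sub_eq_zero] at this

theorem bracket_h_add_eq_zero_of_bracket_self_eq_zero
    (hq : ∀ H : Submodule F L, IsSubalgebra b H → IsQuasiIdeal b H)
    (hB : IsAlmostAbelianModSq b B h) {x : L} (hx : x ∈ B) (hxI : x ∉ sqSpan b)
    (hxx : b x x = 0) : b h x + x = 0 := by
  have hmem : b h x + x ∈ span F {x} ⊔ span F {h} :=
    add_mem ((isQuasiIdeal_span_singleton hq hxx).bracket_mem_sup_span
      (mem_span_singleton_self x) h).2 (mem_sup_left (mem_span_singleton_self x))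
  exact eq_zero_of_mem_sup_span_singleton hB.sqSpan_le hmem (hB.bracket_h_add_mem_sqSpan hx) hx
    hxI hB.notMem

theorem bracket_add_smul_eq_zero
    (hq : ∀ H : Submodule F L, IsSubalgebra b H → IsQuasiIdeal b H)
    (hB : IsAlmostAbelianModSq b B h) {d c : L} {γ : F} (hd : d ∈ B) (hγ : γ ≠ 0)
    (he : b (d + γ • h) (d + γ • h) = 0) (hc : c ∈ B) (hcI : c ∉ sqSpan b) :
    b (d + γ • h) c + γ • c = 0 := by
  have heB : d + γ • h ∉ B := fun heB =>
    hγ (hB.eq_zero_of_smul_mem (by simpa using sub_mem heB hd))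
  have hmem : b (d + γ • h) c + γ • c ∈ span F {c} ⊔ span F {d + γ • h} := by
    refine add_mem ?_ (mem_sup_left (smul_mem _ γ (mem_span_singleton_self c)))
    rw [sup_comm]
    exact ((isQuasiIdeal_span_singleton hq he).bracket_mem_sup_span
      (mem_span_singleton_self _) c).1
  have hmemI : b (d + γ • h) c + γ • c ∈ sqSpan b := by
    have : b (d + γ • h) c + γ • c = b d c + γ • (b h c + c) := by
      simp only [map_add, map_smul, LinearMap.add_apply, LinearMap.smul_apply]
      module
    rw [this]
    exact add_mem (hB.bracket_mem_sqSpan hd hc) (smul_mem _ γ (hB.bracket_h_add_mem_sqSpan hc))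
  exact eq_zero_of_mem_sup_span_singleton hB.sqSpan_le hmem hmemI hc hcI heB

theorem mem_of_bracket_self_eq_zero (hb : IsLeibniz b)
    (hq : ∀ H : Submodule F L, IsSubalgebra b H → IsQuasiIdeal b H) (hI : sqSpan b ≠ ⊥)
    (hB : IsAlmostAbelianModSq b B h) {e : L} (he : b e e = 0) : e ∈ B := by
  obtain ⟨d, hd, γ, rfl⟩ := hB.exists_eq_add_smul e
  by_cases hγ : γ = 0
  · simpa [hγ] using hd
  refine absurd (eq_bot_iff.mpr ?_) hI
  refine le_of_forall_apply_add_smul_mem hB.sqSpan_lt (b (d + γ • h))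
    (fun a ha => hb.bracket_eq_zero_of_mem_sqSpan _ ha) hγ fun c hc hcI => ?_
  rw [mem_bot]
  exact hB.bracket_add_smul_eq_zero hq hd hγ he hc hcI

theorem mem_sqSpan_of_bracket_self_eq_zero (hb : IsLeibniz b)
    (hq : ∀ H : Submodule F L, IsSubalgebra b H → IsQuasiIdeal b H) (hI : sqSpan b ≠ ⊥)
    (hB : IsAlmostAbelianModSq b B h) {e : L} (he : b e e = 0) : e ∈ sqSpan b := by
  have heB := hB.mem_of_bracket_self_eq_zero hb hq hI he
  by_contra heI
  obtain ⟨a, ha, ha0⟩ := (Submodule.ne_bot_iff _).mp hI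
  have hea : b (e + a) (e + a) = 0 := by
    simp only [map_add, LinearMap.add_apply, he, hb.bracket_eq_zero_of_mem_sqSpan _ ha,
      hB.bracket_eq_zero_of_mem_sqSpan_of_mem hb hq ha heB, add_zero]
  -- `[h, ·]` is `-id` on both `e` and `e + a`, yet kills `a`
  have h1 := hB.bracket_h_add_eq_zero_of_bracket_self_eq_zero hq heB heI he
  have h2 := hB.bracket_h_add_eq_zero_of_bracket_self_eq_zero hq (add_mem heB (hB.sqSpan_le ha))
    (fun h => heI (by simpa using sub_mem h ha)) hea
  rw [map_add, hb.bracket_eq_zero_of_mem_sqSpan h ha, add_zero, ← add_assoc, h1, zero_add] at h2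
  exact ha0 h2

theorem bracket_self_h_ne_zero (hb : IsLeibniz b)
    (hq : ∀ H : Submodule F L, IsSubalgebra b H → IsQuasiIdeal b H) (hI : sqSpan b ≠ ⊥)
    (hB : IsAlmostAbelianModSq b B h) : b h h ≠ 0 := fun h0 =>
  hB.notMem (hB.mem_of_bracket_self_eq_zero hb hq hI h0)

theorem bracket_h_eq_two_smul (hb : IsLeibniz b)
    (hq : ∀ H : Submodule F L, IsSubalgebra b H → IsQuasiIdeal b H) (hI : sqSpan b ≠ ⊥)
    (hB : IsAlmostAbelianModSq b B h) {a : L} (ha : a ∈ sqSpan b) : b a h = (2 : F) • a := by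
  obtain ⟨τ, hτ⟩ : ∃ τ : F, ∀ a ∈ sqSpan b, b a h = τ • a :=
    (sqSpan b).exists_forall_apply_eq_smul (b.flip h) fun a ha =>
      exists_bracket_eq_smul hq (hb.bracket_eq_zero_of_mem_sqSpan a ha) (hB.sqSpan_le ha)
        (hB.bracket_h_mem (hB.sqSpan_le ha)) hB.notMem
  obtain ⟨c, hc, hcI⟩ := SetLike.exists_of_lt hB.sqSpan_lt
  have hcc : b c c ≠ 0 := fun h0 => hcI (hB.mem_sqSpan_of_bracket_self_eq_zero hb hq hI h0)
  have key := hb c c h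
  rw [hB.bracket_bracket_h_right hb c hc, hτ _ (hB.bracket_mem_sqSpan hc hc),
    hB.bracket_bracket_h_left hb hq hc hc, eq_sub_iff_add_eq, ← two_smul F] at key
  rw [hτ a ha, (smul_left_injective F hcc) key]

theorem two_eq_zero (hb : IsLeibniz b)
    (hq : ∀ H : Submodule F L, IsSubalgebra b H → IsQuasiIdeal b H) (hI : sqSpan b ≠ ⊥)
    (hB : IsAlmostAbelianModSq b B h) : (2 : F) = 0 := by
  have hw := bracket_self_mem_sqSpan b h
  have hiso : b (b h h - (2 : F) • h) (b h h - (2 : F) • h) = 0 := by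
    simp only [map_sub, map_smul, LinearMap.sub_apply, LinearMap.smul_apply,
      hb.bracket_eq_zero_of_mem_sqSpan _ hw, hB.bracket_h_eq_two_smul hb hq hI hw]
    module
  exact hB.eq_zero_of_smul_mem (by
    simpa using sub_mem (hB.sqSpan_le hw) (hB.mem_of_bracket_self_eq_zero hb hq hI hiso))

theorem ringChar_eq_two (hb : IsLeibniz b)
    (hq : ∀ H : Submodule F L, IsSubalgebra b H → IsQuasiIdeal b H) (hI : sqSpan b ≠ ⊥)
    (hB : IsAlmostAbelianModSq b B h) : ringChar F = 2 :=
  CharP.ringChar_of_prime_eq_zero Nat.prime_two (by exact_mod_cast hB.two_eq_zero hb hq hI)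

theorem bracket_h_eq_zero (hb : IsLeibniz b)
    (hq : ∀ H : Submodule F L, IsSubalgebra b H → IsQuasiIdeal b H) (hI : sqSpan b ≠ ⊥)
    (hB : IsAlmostAbelianModSq b B h) {a : L} (ha : a ∈ sqSpan b) : b a h = 0 := by
  rw [hB.bracket_h_eq_two_smul hb hq hI ha, hB.two_eq_zero hb hq hI, zero_smul]

theorem sqSpan_le_lcenter (hb : IsLeibniz b)
    (hq : ∀ H : Submodule F L, IsSubalgebra b H → IsQuasiIdeal b H) (hI : sqSpan b ≠ ⊥)
    (hB : IsAlmostAbelianModSq b B h) : sqSpan b ≤ lcenter b := fun a ha x => by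
  obtain ⟨d, hd, γ, rfl⟩ := hB.exists_eq_add_smul x
  refine ⟨?_, hb.bracket_eq_zero_of_mem_sqSpan _ ha⟩
  rw [map_add, map_smul, hB.bracket_eq_zero_of_mem_sqSpan_of_mem hb hq ha hd,
    hB.bracket_h_eq_zero hb hq hI ha, smul_zero, add_zero]

theorem sqSpan_eq_span (hb : IsLeibniz b)
    (hq : ∀ H : Submodule F L, IsSubalgebra b H → IsQuasiIdeal b H) (hI : sqSpan b ≠ ⊥)
    (hB : IsAlmostAbelianModSq b B h) : sqSpan b = span F {b h h} := by
  have hw := bracket_self_mem_sqSpan b h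
  refine le_antisymm ?_ ((span_singleton_le_iff_mem _ _).mpr hw)
  have hsub : IsSubalgebra b (span F {h, b h h}) := isSubalgebra_span b (by
    simp [hb.bracket_eq_zero_of_mem_sqSpan _ hw, hB.bracket_h_eq_zero hb hq hI hw]
    exact subset_span (by simp))
  refine le_of_forall_apply_add_smul_mem hB.sqSpan_lt (b h)
    (fun a ha => hb.bracket_eq_zero_of_mem_sqSpan h ha) one_ne_zero fun c hc hcI => ?_
  rw [one_smul]
  have hmem : b h c + c ∈ span F {b h h} ⊔ span F {c} ⊔ span F {h} := by
    have := ((hq _ hsub).bracket_mem_sup_span (subset_span (Set.mem_insert h _)) c).1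
    rw [span_insert, sup_comm (span F {h}), sup_assoc, sup_comm (span F {h}), ← sup_assoc] at this
    exact add_mem this (mem_sup_left (mem_sup_right (mem_span_singleton_self c)))
  have hle : span F {b h h} ⊔ span F {c} ≤ B :=
    sup_le ((span_singleton_le_iff_mem _ _).mpr (hB.sqSpan_le hw))
      ((span_singleton_le_iff_mem _ _).mpr hc)
  have hcI' := hB.bracket_h_add_mem_sqSpan hc
  exact mem_of_mem_sup_span_singleton (mem_of_mem_sup_span_singleton hmem (hB.sqSpan_le hcI') hle
    hB.notMem) hcI' ((span_singleton_le_iff_mem _ _).mpr hw) hcI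

theorem lcenter_eq_span (hb : IsLeibniz b)
    (hq : ∀ H : Submodule F L, IsSubalgebra b H → IsQuasiIdeal b H) (hI : sqSpan b ≠ ⊥)
    (hB : IsAlmostAbelianModSq b B h) : lcenter b = span F {b h h} := by
  rw [← hB.sqSpan_eq_span hb hq hI]
  refine le_antisymm (fun y hy => ?_) (hB.sqSpan_le_lcenter hb hq hI)
  obtain ⟨d, hd, γ, rfl⟩ := hB.exists_eq_add_smul y
  have hdI : d ∈ sqSpan b := by
    have h1 : b d h + γ • b h h = 0 := by simpa using (hy h).1
    have : d = -(b d h - d) - γ • b h h := by linear_combination (norm := module) h1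
    exact this ▸ sub_mem (neg_mem (hB.bracket_sub_mem d hd))
      (smul_mem _ γ (bracket_self_mem_sqSpan b h))
  have hγ : γ = 0 := by
    have h2 : γ • b h h = 0 := by
      simpa [hb.bracket_eq_zero_of_mem_sqSpan h hdI] using (hy h).2
    exact (smul_eq_zero.mp h2).resolve_right (hB.bracket_self_h_ne_zero hb hq hI)
  simpa [hγ] using hdI

theorem bracket_h_comm (hb : IsLeibniz b)
    (hq : ∀ H : Submodule F L, IsSubalgebra b H → IsQuasiIdeal b H) (hI : sqSpan b ≠ ⊥)
    (hB : IsAlmostAbelianModSq b B h) {x : L} (hx : x ∈ B) : b h x = b x h := by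
  have hhx : b (b h x) h + b x h = 0 := by
    simpa using hB.bracket_h_eq_zero hb hq hI (hB.bracket_h_add_mem_sqSpan hx)
  have key := hb h x h
  rw [hB.bracket_bracket_h_right hb h hx, hB.bracket_eq_zero_of_mem_sqSpan_of_mem hb hq
    (bracket_self_mem_sqSpan b h) hx, sub_zero] at key
  rw [key]
  linear_combination (norm := module) hhx - hB.two_eq_zero hb hq hI • b x h

theorem bracket_comm_of_mem (hb : IsLeibniz b)
    (hq : ∀ H : Submodule F L, IsSubalgebra b H → IsQuasiIdeal b H) (hI : sqSpan b ≠ ⊥)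
    (hB : IsAlmostAbelianModSq b B h) {x y : L} (hx : x ∈ B) (hy : y ∈ B) : b x y = b y x := by
  have key := hb h x y
  rw [hb.bracket_eq_zero_of_mem_sqSpan h (hB.bracket_mem_sqSpan hx hy),
    hB.bracket_h_comm hb hq hI hx, hB.bracket_h_comm hb hq hI hy,
    hB.bracket_bracket_h_left hb hq hx hy, hB.bracket_bracket_h_left hb hq hy hx] at key
  exact sub_eq_zero.mp key.symm

theorem le_inf_eigenspace_sup_span (hb : IsLeibniz b)
    (hq : ∀ H : Submodule F L, IsSubalgebra b H → IsQuasiIdeal b H) (hI : sqSpan b ≠ ⊥)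
    (hB : IsAlmostAbelianModSq b B h) :
    B ≤ B ⊓ eigenspace (b.flip h) 1 ⊔ span F {b h h} := by
  intro x hx
  have hw := bracket_self_mem_sqSpan b h
  obtain ⟨ξ, hξ⟩ :=
    mem_span_singleton.mp (hB.sqSpan_eq_span hb hq hI ▸ hB.bracket_sub_mem x hx)
  have hC : x + ξ • b h h ∈ B ⊓ eigenspace (b.flip h) 1 := by
    refine mem_inf_eigenspace_flip_one.mpr ⟨add_mem hx (smul_mem _ ξ (hB.sqSpan_le hw)), ?_⟩
    rw [map_add, LinearMap.add_apply, map_smul, LinearMap.smul_apply,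
      hB.bracket_h_eq_zero hb hq hI hw, smul_zero, add_zero, hξ]
    abel
  simpa using add_mem (mem_sup_left hC)
    (mem_sup_right (smul_mem _ (-ξ) (mem_span_singleton_self (b h h))))

theorem exists_ne_zero_mem_inf_eigenspace (hb : IsLeibniz b)
    (hq : ∀ H : Submodule F L, IsSubalgebra b H → IsQuasiIdeal b H) (hI : sqSpan b ≠ ⊥)
    (hB : IsAlmostAbelianModSq b B h) : ∃ c ∈ B ⊓ eigenspace (b.flip h) 1, c ≠ 0 := by
  refine (Submodule.ne_bot_iff _).mp fun hC => hB.sqSpan_lt.not_ge ?_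
  simpa [hC, ← hB.sqSpan_eq_span hb hq hI] using hB.le_inf_eigenspace_sup_span hb hq hI

theorem eq_zero_of_add_smul_add_smul_eq_zero (hb : IsLeibniz b)
    (hq : ∀ H : Submodule F L, IsSubalgebra b H → IsQuasiIdeal b H) (hI : sqSpan b ≠ ⊥)
    (hB : IsAlmostAbelianModSq b B h) {c : L} (hc : c ∈ B ⊓ eigenspace (b.flip h) 1)
    {α β : F} (h0 : c + α • b h h + β • h = 0) : c = 0 ∧ α = 0 ∧ β = 0 := by
  obtain ⟨hcB, hch⟩ := mem_inf_eigenspace_flip_one.mp hc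
  have hw := bracket_self_mem_sqSpan b h
  have hβ : β = 0 := hB.eq_zero_of_smul_mem (by
    rw [eq_neg_of_add_eq_zero_right h0]
    exact neg_mem (add_mem hcB (smul_mem _ α (hB.sqSpan_le hw))))
  rw [hβ, zero_smul, add_zero] at h0
  have hc0 : c = 0 := by
    simpa [hch, hB.bracket_h_eq_zero hb hq hI hw] using congr_arg (b.flip h) h0
  rw [hc0, zero_add] at h0
  exact ⟨hc0, (smul_eq_zero.mp h0).resolve_right (hB.bracket_self_h_ne_zero hb hq hI), hβ⟩

theorem exists_bracket_self_eq_smul_not_square (hb : IsLeibniz b)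
    (hq : ∀ H : Submodule F L, IsSubalgebra b H → IsQuasiIdeal b H) (hI : sqSpan b ≠ ⊥)
    (hB : IsAlmostAbelianModSq b B h) {c : L} (hc : c ∈ B ⊓ eigenspace (b.flip h) 1)
    (hc0 : c ≠ 0) : ∃ l : F, b c c = l • b h h ∧ ∀ α : F, α ^ 2 ≠ l := by
  obtain ⟨hcB, hch⟩ := mem_inf_eigenspace_flip_one.mp hc
  obtain ⟨l, hl⟩ := mem_span_singleton.mp
    (hB.sqSpan_eq_span hb hq hI ▸ hB.bracket_mem_sqSpan hcB hcB)
  refine ⟨l, hl.symm, ?_⟩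
  rintro α rfl
  have hiso : b (c + α • h) (c + α • h) = 0 := by
    simp only [map_add, map_smul, LinearMap.add_apply, LinearMap.smul_apply, ← hl, hch,
      hB.bracket_h_comm hb hq hI hcB]
    linear_combination (norm := module) hB.two_eq_zero hb hq hI • (α • c + (α ^ 2) • b h h)
  have hα : α = 0 := hB.eq_zero_of_smul_mem (by
    simpa using sub_mem (hB.mem_of_bracket_self_eq_zero hb hq hI hiso) hcB)
  rw [hα, zero_smul, add_zero] at hiso
  exact hc0 (hch ▸ hB.bracket_h_eq_zero hb hq hI
    (hB.mem_sqSpan_of_bracket_self_eq_zero hb hq hI hiso))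

end IsAlmostAbelianModSq

end AlmostAbelian

variable {F L : Type*} [Field F] [AddCommGroup L] [Module F L]

theorem structure_of_LI_almost_abelian_general (b : L →ₗ[F] L →ₗ[F] L) (hb : IsLeibniz b)
    (hq : ∀ H : Submodule F L, IsSubalgebra b H → IsQuasiIdeal b H)
    (hI : sqSpan b ≠ ⊥)
    (B : Submodule F L) (hIB : sqSpan b ≤ B)
    (hBne : B ≠ sqSpan b) (hBB : bspan b B B ≤ sqSpan b)
    (h : L) (hhB : h ∉ B) (hspan : B ⊔ Submodule.span F {h} = ⊤)
    (hbh : ∀ x ∈ B, b x h - x ∈ sqSpan b) :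
    -- (i) I ⊆ Z(L)
    sqSpan b ≤ lcenter b ∧
    -- (ii) char F = 2, F has a non-square, and L has the indicated structure
    ringChar F = 2 ∧ (∃ α : F, ∀ β : F, β ^ 2 ≠ α) ∧
    (∃ z : L, z ≠ 0 ∧ lcenter b = Submodule.span F {z} ∧ b h h = z ∧
      ∃ C : Submodule F L,
        C ⊔ Submodule.span F {z} ⊔ Submodule.span F {h} = ⊤ ∧
        (∀ c ∈ C, ∀ α β : F, c + α • z + β • h = 0 → c = 0 ∧ α = 0 ∧ β = 0) ∧
        (∀ c ∈ C, ∀ c' ∈ C, b c c' = b c' c ∧ b c c' ∈ Submodule.span F {z}) ∧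
        (∀ c ∈ C, c ≠ 0 → ∃ l : F, b c c = l • z ∧ ∀ α : F, α ^ 2 ≠ l) ∧
        (∀ c ∈ C, b c h = c ∧ b h c = c)) := by
  have hB : IsAlmostAbelianModSq b B h :=
    ⟨lt_of_le_of_ne hIB (Ne.symm hBne), hBB, hhB, hspan, hbh⟩
  obtain ⟨c₀, hc₀, hc₀0⟩ := hB.exists_ne_zero_mem_inf_eigenspace hb hq hI
  obtain ⟨l₀, -, hl₀⟩ := hB.exists_bracket_self_eq_smul_not_square hb hq hI hc₀ hc₀0
  refine ⟨hB.sqSpan_le_lcenter hb hq hI, hB.ringChar_eq_two hb hq hI, ⟨l₀, hl₀⟩, b h h,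
    hB.bracket_self_h_ne_zero hb hq hI, hB.lcenter_eq_span hb hq hI, rfl,
    B ⊓ eigenspace (b.flip h) 1, ?_,
    fun c hc α β => hB.eq_zero_of_add_smul_add_smul_eq_zero hb hq hI hc,
    fun c hc c' hc' => ?_, fun c hc => hB.exists_bracket_self_eq_smul_not_square hb hq hI hc,
    fun c hc => ?_⟩
  · rw [eq_top_iff, ← hspan]
    exact sup_le_sup_right (hB.le_inf_eigenspace_sup_span hb hq hI) _
  · have hcB := (mem_inf_eigenspace_flip_one.mp hc).1
    have hc'B := (mem_inf_eigenspace_flip_one.mp hc').1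
    exact ⟨hB.bracket_comm_of_mem hb hq hI hcB hc'B,
      hB.sqSpan_eq_span hb hq hI ▸ hB.bracket_mem_sqSpan hcB hc'B⟩
  · obtain ⟨hcB, hch⟩ := mem_inf_eigenspace_flip_one.mp hc
    exact ⟨hch, (hB.bracket_h_comm hb hq hI hcB).trans hch⟩

/-- If every subalgebra of `L` is a quasi-ideal, `I ≠ 0` and `L/I`
is almost abelian, then `I ⊆ Z(L)`, `F` has characteristic 2 with a non-square,
`Z(L) = Fz` is one-dimensional and `L = C ∔ Fz ∔ Fh` with the indicated products. -/
theorem structure_of_LI_almost_abelian (b : L →ₗ[F] L →ₗ[F] L) (hb : IsLeibniz b)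
    (hq : ∀ H : Submodule F L, IsSubalgebra b H → IsQuasiIdeal b H)
    (hI : sqSpan b ≠ ⊥)
    (B : Submodule F L) (hBideal : IsIdeal b B) (hIB : sqSpan b ≤ B)
    (hBne : B ≠ sqSpan b) (hBB : bspan b B B ≤ sqSpan b)
    (h : L) (hhB : h ∉ B) (hspan : B ⊔ Submodule.span F {h} = ⊤)
    (hbh : ∀ x ∈ B, b x h - x ∈ sqSpan b) :
    -- (i) I ⊆ Z(L)
    sqSpan b ≤ lcenter b ∧
    -- (ii) char F = 2, F has a non-square, and L has the indicated structure
    ringChar F = 2 ∧ (∃ α : F, ∀ β : F, β ^ 2 ≠ α) ∧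
    (∃ z : L, z ≠ 0 ∧ lcenter b = Submodule.span F {z} ∧ b h h = z ∧
      ∃ C : Submodule F L,
        C ⊔ Submodule.span F {z} ⊔ Submodule.span F {h} = ⊤ ∧
        (∀ c ∈ C, ∀ α β : F, c + α • z + β • h = 0 → c = 0 ∧ α = 0 ∧ β = 0) ∧
        (∀ c ∈ C, ∀ c' ∈ C, b c c' = b c' c ∧ b c c' ∈ Submodule.span F {z}) ∧
        (∀ c ∈ C, c ≠ 0 → ∃ l : F, b c c = l • z ∧ ∀ α : F, α ^ 2 ≠ l) ∧
        (∀ c ∈ C, b c h = c ∧ b h c = c)) :=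
  structure_of_LI_almost_abelian_general b hb hq hI B hIB hBne hBB h hhB hspan hbh
end
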